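/- With v as above, if r₁ ≤ r₂ are two initial interest rates and the interest rate process satisfies the pathwise comparison r_t^{r₁} ≤ r_t^{r₂} for all t a.s., then v(t, r₂, x) ≤ v(t, r₁, x) for all (t,x). That is, the American put value is non-increasing in the initial interest rate. -/

import Mathlib

open MeasureTheory ProbabilityTheory Filter Set

noncomputable section

variable {Ω : Type*} [m : MeasurableSpace Ω]

/-- The stock price `X_t^{r,x} = x · exp(σ B_t + ∫₀^t (r_s − σ²/2) ds)`. -/
def stock (B rp : ℝ → Ω → ℝ) (σ x t : ℝ) (ω : Ω) : ℝ :=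
  x * Real.exp (σ * B t ω + ∫ s in (0:ℝ)..t, (rp s ω - σ ^ 2 / 2))

/-- Discounted expected payoff `E[exp(−∫₀^τ r_s ds) (K − X_τ^{r,x})⁺]` of the
stopping rule `τ`. -/
def payoff (μ : Measure Ω) (B rp : ℝ → Ω → ℝ) (σ K x : ℝ) (τ : Ω → ℝ) : ℝ :=
  ∫ ω, Real.exp (-∫ s in (0:ℝ)..(τ ω), rp s ω) *
    max (K - stock B rp σ x (τ ω) ω) 0 ∂μ

/-- The American put value
`v(t,x) = sup_{0 ≤ τ ≤ T−t} E[exp(−∫₀^τ r_s ds) (K − X_τ^{r,x})⁺]`,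
the supremum running over stopping times with values in `[0, T−t]`. -/
def value (μ : Measure Ω) (ℱ : Filtration ℝ m) (B rp : ℝ → Ω → ℝ)
    (σ K T t x : ℝ) : ℝ :=
  ⨆ τ : {τ : Ω → ℝ // IsStoppingTime ℱ (fun ω => (τ ω : WithTop ℝ)) ∧ ∀ ω, τ ω ∈ Set.Icc 0 (T - t)},
    payoff μ B rp σ K x τ.1

/- Pulling the discount factor inside the positive part,
`exp(−∫₀^s r) (K − X_s)⁺ = (K exp(−∫₀^s r) − x exp(σ B_s − σ² s/2))⁺`,
the rate appears only in the first term, so a pathwise larger rate gives a pathwise smaller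
discounted payoff for every stopping rule. The suprema then compare once the payoffs for the
smaller rate are bounded: the payoff of any rule is at most `1` plus that of a rule which picks,
on each path, a time whose payoff is within `1` of the pathwise supremum. -/

end

section

variable {Ω : Type*}

noncomputable def discountedPut (B rp : ℝ → Ω → ℝ) (σ K x s : ℝ) (ω : Ω) : ℝ :=
  Real.exp (-∫ u in (0:ℝ)..s, rp u ω) * max (K - stock B rp σ x s ω) 0

lemma discountedPut_nonneg (B rp : ℝ → Ω → ℝ) (σ K x s : ℝ) (ω : Ω) :
    0 ≤ discountedPut B rp σ K x s ω :=
  mul_nonneg (Real.exp_pos _).le (le_max_right _ _)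

lemma discountedPut_eq {B rp : ℝ → Ω → ℝ} {s : ℝ} {ω : Ω} (σ K x : ℝ)
    (hrp : IntervalIntegrable (fun u => rp u ω) volume 0 s) :
    discountedPut B rp σ K x s ω =
      max (K * Real.exp (-∫ u in (0:ℝ)..s, rp u ω) - x * Real.exp (σ * B s ω - s * (σ ^ 2 / 2))) 0 := by
  have hint : ∫ u in (0:ℝ)..s, (rp u ω - σ ^ 2 / 2) = (∫ u in (0:ℝ)..s, rp u ω) - s * (σ ^ 2 / 2) := by
    rw [intervalIntegral.integral_sub hrp intervalIntegrable_const,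
      intervalIntegral.integral_const, smul_eq_mul, sub_zero]
  rw [discountedPut, stock, hint, mul_max_of_nonneg _ _ (Real.exp_pos _).le, mul_zero, mul_sub,
    mul_left_comm, ← Real.exp_add, mul_comm (Real.exp _) K]
  ring_nf

lemma discountedPut_le_of_rate_le {B rp₁ rp₂ : ℝ → Ω → ℝ} {σ K x s : ℝ} {ω : Ω}
    (hK : 0 ≤ K) (hs : 0 ≤ s) (hle : ∀ u, rp₁ u ω ≤ rp₂ u ω)
    (h₁ : IntervalIntegrable (fun u => rp₁ u ω) volume 0 s)
    (h₂ : IntervalIntegrable (fun u => rp₂ u ω) volume 0 s) :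
    discountedPut B rp₂ σ K x s ω ≤ discountedPut B rp₁ σ K x s ω := by
  have hdisc : ∫ u in (0:ℝ)..s, rp₁ u ω ≤ ∫ u in (0:ℝ)..s, rp₂ u ω :=
    intervalIntegral.integral_mono_on hs h₁ h₂ fun u _ => hle u
  rw [discountedPut_eq σ K x h₁, discountedPut_eq σ K x h₂]
  gcongr

lemma bddAbove_discountedPut_image {B rp : ℝ → Ω → ℝ} {σ K x T : ℝ} {ω : Ω}
    (hK : 0 ≤ K) (hx : 0 ≤ x) (hT : 0 ≤ T)
    (hrp : IntervalIntegrable (fun u => rp u ω) volume 0 T) :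
    BddAbove ((fun s => discountedPut B rp σ K x s ω) '' Icc 0 T) := by
  have hprim : ContinuousOn (fun s => ∫ u in (0:ℝ)..s, rp u ω) (Icc 0 T) := by
    simpa [uIcc_of_le hT] using intervalIntegral.continuousOn_primitive_interval' hrp left_mem_uIcc
  obtain ⟨C, hC⟩ := (isCompact_Icc.image_of_continuousOn hprim.neg.rexp).bddAbove
  refine ⟨C * K, ?_⟩
  rintro _ ⟨s, hs, rfl⟩
  have hput : max (K - stock B rp σ x s ω) 0 ≤ K :=
    max_le (sub_le_self _ (mul_nonneg hx (Real.exp_pos _).le)) hK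
  exact mul_le_mul (hC ⟨s, hs, rfl⟩) hput (le_max_right _ _)
    ((Real.exp_pos _).le.trans (hC ⟨s, hs, rfl⟩))

end

variable {Ω : Type*} [m : MeasurableSpace Ω]

lemma exists_forall_integral_comp_le {ι : Type*} {μ : Measure Ω} [IsFiniteMeasure μ]
    {S : Set ι} (hS : S.Nonempty) {f : ι → Ω → ℝ}
    (hbdd : ∀ᵐ ω ∂μ, BddAbove ((fun s => f s ω) '' S))
    (hint : ∀ τ : Ω → ι, (∀ ω, τ ω ∈ S) → Integrable (fun ω => f (τ ω) ω) μ) :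
    ∃ C, ∀ τ : Ω → ι, (∀ ω, τ ω ∈ S) → ∫ ω, f (τ ω) ω ∂μ ≤ C := by
  have hnear : ∀ ω, ∃ s ∈ S, BddAbove ((fun s => f s ω) '' S) →
      sSup ((fun s => f s ω) '' S) ≤ f s ω + 1 := by
    intro ω
    by_cases hb : BddAbove ((fun s => f s ω) '' S)
    · obtain ⟨_, ⟨s, hs, rfl⟩, hlt⟩ :=
        exists_lt_of_lt_csSup (hS.image _) (sub_one_lt (sSup ((fun s => f s ω) '' S)))
      exact ⟨s, hs, fun _ => by linarith⟩
    · exact ⟨hS.some, hS.some_mem, fun h => absurd h hb⟩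
  choose τ' hτ'S hτ' using hnear
  refine ⟨∫ ω, (f (τ' ω) ω + 1) ∂μ, fun τ hτ => integral_mono_ae (hint τ hτ)
    ((hint τ' hτ'S).add (integrable_const 1)) ?_⟩
  filter_upwards [hbdd] with ω hb
  exact (le_csSup hb ⟨τ ω, hτ ω, rfl⟩).trans (hτ' ω hb)

theorem value_antitone_in_initial_rate_general
    (μ : Measure Ω) [IsProbabilityMeasure μ] (ℱ : Filtration ℝ m)
    (B : ℝ → Ω → ℝ) (σ K T : ℝ) (hK : 0 < K)
    (rp1 rp2 : ℝ → Ω → ℝ)   -- the rate processes started from `r₁` and `r₂`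
    (hcomp : ∀ᵐ ω ∂μ, ∀ t, rp1 t ω ≤ rp2 t ω)
    (hintegr : ∀ᵐ ω ∂μ, ∀ t ∈ Set.Icc 0 T,
      IntervalIntegrable (fun s => rp1 s ω) MeasureTheory.volume 0 t ∧
      IntervalIntegrable (fun s => rp2 s ω) MeasureTheory.volume 0 t)
    (hpay : ∀ x > (0:ℝ), ∀ τ : Ω → ℝ, (∀ ω, τ ω ∈ Set.Icc 0 T) →
      Integrable (fun ω => Real.exp (-∫ s in (0:ℝ)..(τ ω), rp1 s ω) *
        max (K - stock B rp1 σ x (τ ω) ω) 0) μ) :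
    ∀ t ∈ Set.Icc 0 T, ∀ x > (0:ℝ),
      value μ ℱ B rp2 σ K T t x ≤ value μ ℱ B rp1 σ K T t x := by
  intro t ht x hx
  have hsub : Icc (0:ℝ) (T - t) ⊆ Icc 0 T := Icc_subset_Icc le_rfl (sub_le_self T ht.1)
  have hint : ∀ τ : Ω → ℝ, (∀ ω, τ ω ∈ Icc 0 (T - t)) →
      Integrable (fun ω => discountedPut B rp1 σ K x (τ ω) ω) μ :=
    fun τ hτ => hpay x hx τ fun ω => hsub (hτ ω)
  have hpoint : ∀ τ : Ω → ℝ, (∀ ω, τ ω ∈ Icc 0 (T - t)) →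
      payoff μ B rp2 σ K x τ ≤ payoff μ B rp1 σ K x τ := by
    intro τ hτ
    refine integral_mono_of_nonneg (ae_of_all _ fun ω => discountedPut_nonneg ..) (hint τ hτ) ?_
    filter_upwards [hcomp, hintegr] with ω hle hrp
    obtain ⟨h₁, h₂⟩ := hrp (τ ω) (hsub (hτ ω))
    exact discountedPut_le_of_rate_le hK.le (hτ ω).1 hle h₁ h₂
  have hbdd : ∀ᵐ ω ∂μ, BddAbove ((fun s => discountedPut B rp1 σ K x s ω) '' Icc 0 (T - t)) := by
    filter_upwards [hintegr] with ω hrp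
    exact bddAbove_discountedPut_image hK.le hx.le (sub_nonneg.2 ht.2)
      (hrp (T - t) (hsub ⟨sub_nonneg.2 ht.2, le_rfl⟩)).1
  obtain ⟨C, hC⟩ := exists_forall_integral_comp_le (nonempty_Icc.2 (sub_nonneg.2 ht.2)) hbdd hint
  exact ciSup_mono ⟨C, by rintro _ ⟨τ, rfl⟩; exact hC τ.1 τ.2.2⟩ fun τ => hpoint τ.1 τ.2.2

/-- If `r₁ ≤ r₂` are two initial interest rates and the corresponding
interest rate processes satisfy the pathwise comparison `r_t^{r₁} ≤ r_t^{r₂}` for all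
`t` a.s., then `v(t, r₂, x) ≤ v(t, r₁, x)` for all `(t, x)`: the American put value is
non-increasing in the initial interest rate. -/
theorem value_antitone_in_initial_rate
    (μ : Measure Ω) [IsProbabilityMeasure μ] (ℱ : Filtration ℝ m)
    (B : ℝ → Ω → ℝ) (σ K T : ℝ) (hσ : 0 < σ) (hK : 0 < K) (hT : 0 < T)
    (r₁ r₂ : ℝ) (hr : r₁ ≤ r₂)
    (rp1 rp2 : ℝ → Ω → ℝ)   -- the rate processes started from `r₁` and `r₂`
    (hinit : ∀ ω, rp1 0 ω = r₁ ∧ rp2 0 ω = r₂)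
    (hcomp : ∀ᵐ ω ∂μ, ∀ t, rp1 t ω ≤ rp2 t ω)
    (hintegr : ∀ᵐ ω ∂μ, ∀ t ∈ Set.Icc 0 T,
      IntervalIntegrable (fun s => rp1 s ω) MeasureTheory.volume 0 t ∧
      IntervalIntegrable (fun s => rp2 s ω) MeasureTheory.volume 0 t)
    (hpay : ∀ x > (0:ℝ), ∀ τ : Ω → ℝ, (∀ ω, τ ω ∈ Set.Icc 0 T) →
      Integrable (fun ω => Real.exp (-∫ s in (0:ℝ)..(τ ω), rp1 s ω) *
        max (K - stock B rp1 σ x (τ ω) ω) 0) μ) :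
    ∀ t ∈ Set.Icc 0 T, ∀ x > (0:ℝ),
      value μ ℱ B rp2 σ K T t x ≤ value μ ℱ B rp1 σ K T t x :=
  value_antitone_in_initial_rate_general μ ℱ B σ K T hK rp1 rp2 hcomp hintegr hpay
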